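/- Let R₁ and R₂ be weighted graphs on the same finite vertex set V and let F be a graph on f vertices. Then |hom(F, R₁) − hom(F, R₂)| ≤ f² · d_□(R₁, R₂). -/

import Mathlib

open Finset
open scoped Classical

noncomputable section

/-- The 0/1 adjacency indicator of a simple graph, as a real number. -/
def adj01 {V : Type*} (G : SimpleGraph V) (u v : V) : ℝ :=
  if G.Adj u v then 1 else 0

/-- The normalized edit distance between two graphs on the same finite vertex set:
`|E(Γ) △ E(Γ')| / |V|²`, counting ordered pairs. -/
def editDist {V : Type*} [Fintype V] (G H : SimpleGraph V) : ℝ :=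
  (∑ u : V, ∑ v : V, |adj01 G u v - adj01 H u v|) / (Fintype.card V : ℝ) ^ 2

/-- The distance from a graph to a set of graphs on the same vertex set. -/
def distToSet {V : Type*} [Fintype V] (G : SimpleGraph V) (P : Set (SimpleGraph V)) : ℝ :=
  sInf (editDist G '' P)

/-- `φ` is an induced homomorphism from `F` to `G`: it preserves adjacency and
non-adjacency. -/
def IsInducedHom {α β : Type*} (F : SimpleGraph α) (G : SimpleGraph β) (φ : α → β) : Prop :=
  ∀ u v : α, u ≠ v → (F.Adj u v ↔ G.Adj (φ u) (φ v))

/-- The induced homomorphism density of `F` in `G`: the fraction of all maps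
`V(F) → V(G)` that are induced homomorphisms. -/
def homDensity {α β : Type*} [Fintype α] [Fintype β] (F : SimpleGraph α) (G : SimpleGraph β) :
    ℝ :=
  ((Finset.univ.filter fun φ : α → β => IsInducedHom F G φ).card : ℝ) /
    (Fintype.card (α → β) : ℝ)

/-- A family of finite simple graphs: for each number of vertices, a set of graphs. -/
abbrev GraphFamily := ∀ m : ℕ, Set (SimpleGraph (Fin m))

/-- A graph property: for each number of vertices, a set of graphs. -/
abbrev GraphProperty := ∀ n : ℕ, Set (SimpleGraph (Fin n))

/-- `G` has no induced subgraph isomorphic to a member of the family `F`. -/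
def InForb (F : GraphFamily) {n : ℕ} (G : SimpleGraph (Fin n)) : Prop :=
  ∀ (m : ℕ) (F' : SimpleGraph (Fin m)), F' ∈ F m →
    ¬ ∃ φ : Fin m → Fin n, Function.Injective φ ∧ IsInducedHom F' G φ

/-- The hereditary graph property `Forb(F)` of graphs with no induced copy of a member
of `F`. -/
def Forb (F : GraphFamily) : GraphProperty := fun _n => {G | InForb F G}

/-- A weighted graph on `V`: a symmetric function `V × V → [0,1]` (loops allowed). -/
structure WeightedGraph (V : Type*) where
  w : V → V → ℝ
  symm : ∀ u v, w u v = w v u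
  nonneg : ∀ u v, 0 ≤ w u v
  le_one : ∀ u v, w u v ≤ 1

/-- The normalized ℓ₁-distance `d₁` between two weighted graphs on the same vertex set. -/
def d1 {V : Type*} [Fintype V] (R S : WeightedGraph V) : ℝ :=
  (∑ u : V, ∑ v : V, |R.w u v - S.w u v|) / (Fintype.card V : ℝ) ^ 2

/-- The cut-distance between two weighted graphs on the same vertex set. -/
def dCut {V : Type*} [Fintype V] (R S : WeightedGraph V) : ℝ :=
  sSup { d : ℝ | ∃ α β : V → ℝ,
    (∀ v, α v ∈ Set.Icc (0 : ℝ) 1) ∧ (∀ v, β v ∈ Set.Icc (0 : ℝ) 1) ∧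
    d = |∑ x : V, ∑ y : V, α x * (R.w x y - S.w x y) * β y| / (Fintype.card V : ℝ) ^ 2 }

/-- A simple graph viewed as a weighted graph with 0/1 weights. -/
def toWeighted {V : Type*} (G : SimpleGraph V) : WeightedGraph V where
  w := adj01 G
  symm := fun _ _ => by simp [adj01, SimpleGraph.adj_comm]
  nonneg := fun _ _ => by unfold adj01; split <;> norm_num
  le_one := fun _ _ => by unfold adj01; split <;> norm_num

/-- The class of index `i` in the partition of `Fin n` encoded by `p : Fin n → Fin k`. -/
def cls {n k : ℕ} (p : Fin n → Fin k) (i : Fin k) : Finset (Fin n) :=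
  Finset.univ.filter fun v => p v = i

/-- `p` encodes an equipartition: any two class sizes differ by at most one. -/
def IsEquipartition {n k : ℕ} (p : Fin n → Fin k) : Prop :=
  ∀ i j : Fin k, (cls p i).card ≤ (cls p j).card + 1

/-- The number of ordered pairs `(u,v) ∈ A × B` with `u` adjacent to `v`. -/
def pairCount {V : Type*} (G : SimpleGraph V) (A B : Finset V) : ℕ :=
  ∑ u ∈ A, ∑ v ∈ B, if G.Adj u v then 1 else 0

lemma pairCount_symm {V : Type*} (G : SimpleGraph V) (A B : Finset V) :
    pairCount G A B = pairCount G B A := by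
  unfold pairCount
  rw [Finset.sum_comm]
  exact Finset.sum_congr rfl fun v _ => Finset.sum_congr rfl fun u _ => by
    simp [SimpleGraph.adj_comm]

lemma pairCount_le {V : Type*} (G : SimpleGraph V) (A B : Finset V) :
    pairCount G A B ≤ A.card * B.card := by
  unfold pairCount
  calc ∑ u ∈ A, ∑ v ∈ B, (if G.Adj u v then 1 else 0)
      ≤ ∑ u ∈ A, ∑ _v ∈ B, 1 := by
        refine Finset.sum_le_sum fun _ _ => Finset.sum_le_sum fun _ _ => ?_
        split <;> omega
    _ = A.card * B.card := by simp [Finset.sum_const, smul_eq_mul]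

/-- The reduced graph `Γ/𝒱` of `G` with respect to the partition encoded by `p`. -/
def reduced {n k : ℕ} (G : SimpleGraph (Fin n)) (p : Fin n → Fin k) :
    WeightedGraph (Fin k) where
  w i j := (pairCount G (cls p i) (cls p j) : ℝ) /
    (((cls p i).card : ℝ) * ((cls p j).card : ℝ))
  symm i j := by
    rw [pairCount_symm, mul_comm]
  nonneg i j := by positivity
  le_one i j := by
    have h : (pairCount G (cls p i) (cls p j) : ℝ) ≤
        ((cls p i).card : ℝ) * ((cls p j).card : ℝ) := by
      exact_mod_cast pairCount_le G (cls p i) (cls p j)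
    exact div_le_one_of_le₀ h (by positivity)

/-- The blown-up reduced graph `Γ_𝒱`. -/
def blowup {n k : ℕ} (G : SimpleGraph (Fin n)) (p : Fin n → Fin k) :
    WeightedGraph (Fin n) where
  w u v := (reduced G p).w (p u) (p v)
  symm _ _ := (reduced G p).symm _ _
  nonneg _ _ := (reduced G p).nonneg _ _
  le_one _ _ := (reduced G p).le_one _ _

/-- The partition encoded by `p` is `γ`-FK-regular for `G`. -/
def IsFKRegular {n k : ℕ} (G : SimpleGraph (Fin n)) (p : Fin n → Fin k) (γ : ℝ) : Prop :=
  dCut (toWeighted G) (blowup G p) ≤ γ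

/-- `G ∈ Red₂(S)`: `G` admits an equipartition into `|V(S)|` classes whose reduced graph
is within `d₁`-distance `2/|V(S)|` of `S`. -/
def InRed2 {k : ℕ} (S : WeightedGraph (Fin k)) {n : ℕ} (G : SimpleGraph (Fin n)) : Prop :=
  ∃ p : Fin n → Fin k, IsEquipartition p ∧ d1 (reduced G p) S ≤ 2 / (k : ℝ)

/-- `S ∈ P*_ε`: every graph in `Red₂(S)` is `ε`-close to `P`. -/
def InStar (P : GraphProperty) (ε : ℝ) {k : ℕ} (S : WeightedGraph (Fin k)) : Prop :=
  ∀ (n : ℕ) (G : SimpleGraph (Fin n)), InRed2 S G → distToSet G (P n) ≤ ε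

/-- The set of numbers `d₁(Γ/𝒱, S)` over all equipartitions `𝒱` of `Γ` into at most `K`
classes and all weighted graphs `S ∈ P*_ε` on the corresponding vertex set. -/
def dhatSet (P : GraphProperty) (ε : ℝ) (K : ℕ) {n : ℕ} (G : SimpleGraph (Fin n)) :
    Set ℝ :=
  { d : ℝ | ∃ k, 1 ≤ k ∧ k ≤ K ∧ ∃ p : Fin n → Fin k, IsEquipartition p ∧
      ∃ S : WeightedGraph (Fin k), InStar P ε S ∧ d = d1 (reduced G p) S }

/-- `d̂_{K,ε,P}(Γ)`: the minimum over reduced graphs `R` of `Γ` (with at most `K` classes)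
of the distance from `R` to `P*_ε`. -/
def dhat (P : GraphProperty) (ε : ℝ) (K : ℕ) {n : ℕ} (G : SimpleGraph (Fin n)) : ℝ :=
  sInf (dhatSet P ε K G)

/-- A graph property `P` is `f`-attestable. -/
def Attestable (P : GraphProperty) (f : ℝ → ℕ) : Prop :=
  ∀ ε : ℝ, 0 < ε → ∀ (n : ℕ) (G : SimpleGraph (Fin n)), G ∈ P n →
    (f ε : ℝ) ^ ((3 : ℝ) / 2) ≤ (n : ℝ) →
    ∃ k, 1 ≤ k ∧ k ≤ f ε ∧ ∃ p : Fin n → Fin k, IsEquipartition p ∧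
      InStar P ε (reduced G p)

/-- The subgraph induced by a vertex subset `X` of size `s`, as a graph on `Fin s`
(via the order isomorphism `Fin s ≃o X`); junk value if `|X| ≠ s`. -/
def sampleGraph {n : ℕ} (G : SimpleGraph (Fin n)) (s : ℕ) (X : Finset (Fin n)) :
    SimpleGraph (Fin s) :=
  if h : X.card = s then SimpleGraph.comap (fun i => ((X.orderIsoOfFin h) i).1) G else ⊥

/-- With probability at least `2/3`, a uniformly random `s`-element vertex subset `X`
of `G` satisfies `|g(G[X]) - value| ≤ ε`. -/
def EstimatesAt {n : ℕ} (G : SimpleGraph (Fin n)) (s : ℕ) (g : SimpleGraph (Fin s) → ℝ)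
    (value ε : ℝ) : Prop :=
  (2 : ℝ) / 3 ≤
    ((((Finset.univ : Finset (Fin n)).powersetCard s).filter fun X =>
        |g (sampleGraph G s X) - value| ≤ ε).card : ℝ) /
      (((Finset.univ : Finset (Fin n)).powersetCard s).card : ℝ)

/-- Relabelling a weighted graph along a bijection of vertex sets. -/
def WeightedGraph.relabel {V W : Type*} (σ : V ≃ W) (R : WeightedGraph W) :
    WeightedGraph V where
  w u v := R.w (σ u) (σ v)
  symm _ _ := R.symm _ _
  nonneg _ _ := R.nonneg _ _
  le_one _ _ := R.le_one _ _

/-- The weight of a map on an unordered pair of vertices. -/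
def pairWeight {α V : Type*} (R : WeightedGraph V) (φ : α → V) : Sym2 α → ℝ :=
  Sym2.lift ⟨fun u v => R.w (φ u) (φ v), fun u v => R.symm (φ u) (φ v)⟩

/-- The induced homomorphism weight `hom_φ(F,R)` of a map `φ : V(F) → V(R)`. -/
def homWeight {α V : Type*} [Fintype α] (F : SimpleGraph α) (R : WeightedGraph V)
    (φ : α → V) : ℝ :=
  (∏ e ∈ Finset.univ.filter fun e : Sym2 α => e ∈ F.edgeSet, pairWeight R φ e) *
    ∏ e ∈ Finset.univ.filter fun e : Sym2 α => ¬ e.IsDiag ∧ e ∉ F.edgeSet,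
      (1 - pairWeight R φ e)

/-- The induced homomorphism density of a graph `F` in a weighted graph `R`: the average
of `hom_φ(F,R)` over all maps `φ : V(F) → V(R)`. -/
def homW {α V : Type*} [Fintype α] [Fintype V] (F : SimpleGraph α) (R : WeightedGraph V) :
    ℝ :=
  (∑ φ : α → V, homWeight F R φ) / (Fintype.card (α → V) : ℝ)

section AuxStatement7
variable {V : Type*} [Fintype V] (R₁ R₂ : WeightedGraph V)

lemma dCut_bddAbove : BddAbove { d : ℝ | ∃ α β : V → ℝ,
    (∀ v, α v ∈ Set.Icc (0 : ℝ) 1) ∧ (∀ v, β v ∈ Set.Icc (0 : ℝ) 1) ∧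
    d = |∑ x : V, ∑ y : V, α x * (R₁.w x y - R₂.w x y) * β y| / (Fintype.card V : ℝ) ^ 2 } := by
  refine ⟨1, ?_⟩
  rintro d ⟨α, β, hα, hβ, rfl⟩
  rcases Nat.eq_zero_or_pos (Fintype.card V) with h | h
  · simp [h]
  · rw [div_le_one (by positivity)]
    calc |∑ x : V, ∑ y : V, α x * (R₁.w x y - R₂.w x y) * β y|
        ≤ ∑ x : V, ∑ y : V, |α x * (R₁.w x y - R₂.w x y) * β y| := by
          refine (Finset.abs_sum_le_sum_abs _ _).trans ?_
          exact Finset.sum_le_sum fun x _ => Finset.abs_sum_le_sum_abs _ _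
      _ ≤ ∑ _x : V, ∑ _y : V, (1:ℝ) := by
          refine Finset.sum_le_sum fun x _ => Finset.sum_le_sum fun y _ => ?_
          rw [abs_mul, abs_mul]
          have h1 : |α x| ≤ 1 := abs_le.2 ⟨by linarith [(hα x).1], (hα x).2⟩
          have h2 : |β y| ≤ 1 := abs_le.2 ⟨by linarith [(hβ y).1], (hβ y).2⟩
          have h3 : |R₁.w x y - R₂.w x y| ≤ 1 := abs_le.2 ⟨by linarith [R₁.nonneg x y, R₂.le_one x y], by linarith [R₁.le_one x y, R₂.nonneg x y]⟩
          calc |α x| * |R₁.w x y - R₂.w x y| * |β y| ≤ 1 * 1 * 1 := by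
                exact mul_le_mul (mul_le_mul h1 h3 (abs_nonneg _) (by norm_num)) h2 (abs_nonneg _) (by norm_num)
            _ = 1 := by norm_num
      _ = (Fintype.card V : ℝ) ^ 2 := by simp [Finset.card_univ]; ring

lemma dCut_nonneg : 0 ≤ dCut R₁ R₂ := by
  apply le_csSup (dCut_bddAbove R₁ R₂)
  exact ⟨fun _ => 0, fun _ => 0, fun _ => by norm_num, fun _ => by norm_num, by simp⟩

lemma le_dCut (α β : V → ℝ) (hα : ∀ v, α v ∈ Set.Icc (0:ℝ) 1) (hβ : ∀ v, β v ∈ Set.Icc (0:ℝ) 1) :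
    |∑ x : V, ∑ y : V, α x * (R₁.w x y - R₂.w x y) * β y| ≤ dCut R₁ R₂ * (Fintype.card V : ℝ) ^ 2 := by
  rcases Nat.eq_zero_or_pos (Fintype.card V) with h | h
  · have : IsEmpty V := Fintype.card_eq_zero_iff.mp h
    simp [h]
  · have hmem : |∑ x : V, ∑ y : V, α x * (R₁.w x y - R₂.w x y) * β y| / (Fintype.card V : ℝ) ^ 2 ≤ dCut R₁ R₂ :=
      le_csSup (dCut_bddAbove R₁ R₂) ⟨α, β, hα, hβ, rfl⟩
    have hpos : (0:ℝ) < (Fintype.card V : ℝ) ^ 2 := by positivity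
    calc |∑ x : V, ∑ y : V, α x * (R₁.w x y - R₂.w x y) * β y|
        = |∑ x : V, ∑ y : V, α x * (R₁.w x y - R₂.w x y) * β y| / (Fintype.card V : ℝ) ^ 2 * (Fintype.card V : ℝ) ^ 2 := by
          field_simp
      _ ≤ dCut R₁ R₂ * (Fintype.card V : ℝ) ^ 2 := by
          exact mul_le_mul_of_nonneg_right hmem (le_of_lt hpos)

variable {ι V : Type*} [Fintype ι] [Fintype V] [DecidableEq ι]

lemma sum_update (w : ι) (g : (ι → V) → ℝ) :
    ∑ φ : ι → V, ∑ x : V, g (Function.update φ w x) = (Fintype.card V : ℝ) * ∑ φ : ι → V, g φ := by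
  have hσ : Function.Bijective (fun p : (ι → V) × V => (Function.update p.1 w p.2, p.1 w)) := by
    have hinv : Function.Involutive (fun p : (ι → V) × V => (Function.update p.1 w p.2, p.1 w)) := by
      rintro ⟨φ, x⟩
      simp [Function.update_idem, Function.update_eq_self, Function.update_self]
    exact hinv.bijective
  have key : ∑ p : (ι → V) × V, g (Function.update p.1 w p.2) = ∑ p : (ι → V) × V, g p.1 :=
    Fintype.sum_bijective _ hσ (fun p => g (Function.update p.1 w p.2)) (fun p => g p.1)
      (fun p => rfl)
  have e1 : ∑ φ : ι → V, ∑ x : V, g (Function.update φ w x)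
      = ∑ p : (ι → V) × V, g (Function.update p.1 w p.2) := by
    exact (Fintype.sum_prod_type (f := fun p : (ι → V) × V => g (Function.update p.1 w p.2))).symm
  have e2 : ∑ p : (ι → V) × V, g p.1 = (Fintype.card V : ℝ) * ∑ φ : ι → V, g φ := by
    rw [Fintype.sum_prod_type]
    simp [Finset.sum_const, card_univ, Finset.mul_sum]
  rw [e1, key, e2]

lemma sum_update2 (u v : ι) (g : (ι → V) → ℝ) :
    ∑ φ : ι → V, ∑ x : V, ∑ y : V, g (Function.update (Function.update φ u x) v y)
      = (Fintype.card V : ℝ) ^ 2 * ∑ φ : ι → V, g φ := by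
  have h1 := sum_update (V := V) u (fun ψ => ∑ y : V, g (Function.update ψ v y))
  rw [sum_update v g] at h1
  rw [h1]; ring


variable {f : ℕ}

lemma core_lemma (R₁ R₂ : WeightedGraph V) (u v : Fin f) (huv : u ≠ v) (c : (Fin f → V) → ℝ)
    (hc : ∀ φ, c φ ∈ Set.Icc (0:ℝ) 1)
    (hfac : ∀ φ : Fin f → V, ∃ α β : V → ℝ,
      (∀ x, α x ∈ Set.Icc (0:ℝ) 1) ∧ (∀ y, β y ∈ Set.Icc (0:ℝ) 1) ∧
      ∀ x y, c (Function.update (Function.update φ u x) v y) = α x * β y) :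
    |∑ φ : Fin f → V, (R₁.w (φ u) (φ v) - R₂.w (φ u) (φ v)) * c φ|
      ≤ dCut R₁ R₂ * (Fintype.card (Fin f → V) : ℝ) := by
  rcases Nat.eq_zero_or_pos (Fintype.card V) with h0 | hpos
  · have hV : IsEmpty V := Fintype.card_eq_zero_iff.mp h0
    have : IsEmpty (Fin f → V) := by
      have : Nonempty (Fin f) := ⟨u⟩
      exact ⟨fun φ => hV.false (φ u)⟩
    simp [Finset.univ_eq_empty, Fintype.card_eq_zero]
  · set g : (Fin f → V) → ℝ := fun φ => (R₁.w (φ u) (φ v) - R₂.w (φ u) (φ v)) * c φ with hg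
    have key := sum_update2 (V := V) u v g
    have hbound : ∀ φ : Fin f → V,
        |∑ x : V, ∑ y : V, g (Function.update (Function.update φ u x) v y)|
          ≤ dCut R₁ R₂ * (Fintype.card V : ℝ) ^ 2 := by
      intro φ
      obtain ⟨α, β, hα, hβ, hαβ⟩ := hfac φ
      have heq : ∀ x y : V, g (Function.update (Function.update φ u x) v y)
          = α x * (R₁.w x y - R₂.w x y) * β y := by
        intro x y
        have hu : (Function.update (Function.update φ u x) v y) u = x := by
          rw [Function.update_of_ne huv, Function.update_self]
        have hv : (Function.update (Function.update φ u x) v y) v = y :=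
          Function.update_self _ _ _
        rw [hg]
        simp only [hu, hv, hαβ x y]
        ring
      calc |∑ x : V, ∑ y : V, g (Function.update (Function.update φ u x) v y)|
          = |∑ x : V, ∑ y : V, α x * (R₁.w x y - R₂.w x y) * β y| := by
            congr 1
            exact Finset.sum_congr rfl fun x _ => Finset.sum_congr rfl fun y _ => heq x y
        _ ≤ dCut R₁ R₂ * (Fintype.card V : ℝ) ^ 2 := le_dCut R₁ R₂ α β hα hβ
    have habs : (Fintype.card V : ℝ) ^ 2 * |∑ φ : Fin f → V, g φ|
        ≤ (Fintype.card (Fin f → V) : ℝ) * (dCut R₁ R₂ * (Fintype.card V : ℝ) ^ 2) := by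
      calc (Fintype.card V : ℝ) ^ 2 * |∑ φ : Fin f → V, g φ|
          = |∑ φ : Fin f → V, ∑ x : V, ∑ y : V, g (Function.update (Function.update φ u x) v y)| := by
            rw [key, abs_mul]
            congr 1
            rw [abs_of_nonneg (by positivity)]
        _ ≤ ∑ φ : Fin f → V, |∑ x : V, ∑ y : V, g (Function.update (Function.update φ u x) v y)| :=
            Finset.abs_sum_le_sum_abs _ _
        _ ≤ ∑ _φ : Fin f → V, dCut R₁ R₂ * (Fintype.card V : ℝ) ^ 2 :=
            Finset.sum_le_sum fun φ _ => hbound φ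
        _ = (Fintype.card (Fin f → V) : ℝ) * (dCut R₁ R₂ * (Fintype.card V : ℝ) ^ 2) := by
            simp [Finset.sum_const, card_univ]
    have hq : (0:ℝ) < (Fintype.card V : ℝ) ^ 2 := by positivity
    refine le_of_mul_le_mul_right ?_ hq
    calc |∑ φ : Fin f → V, g φ| * (Fintype.card V : ℝ) ^ 2
        = (Fintype.card V : ℝ) ^ 2 * |∑ φ : Fin f → V, g φ| := by ring
      _ ≤ (Fintype.card (Fin f → V) : ℝ) * (dCut R₁ R₂ * (Fintype.card V : ℝ) ^ 2) := habs
      _ = dCut R₁ R₂ * (Fintype.card (Fin f → V) : ℝ) * (Fintype.card V : ℝ) ^ 2 := by ring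


section Tele
variable {V : Type*} [Fintype V] {f : ℕ}

def wfun (F : SimpleGraph (Fin f)) (R : WeightedGraph V) (φ : Fin f → V)
    (e : Sym2 (Fin f)) : ℝ :=
  if e ∈ F.edgeSet then pairWeight R φ e else 1 - pairWeight R φ e

lemma pairWeight_mem (R : WeightedGraph V) (φ : Fin f → V) (e : Sym2 (Fin f)) :
    pairWeight R φ e ∈ Set.Icc (0:ℝ) 1 := by
  induction e using Sym2.ind with
  | _ a b => exact ⟨R.nonneg _ _, R.le_one _ _⟩

lemma pairWeight_congr (R : WeightedGraph V) (φ ψ : Fin f → V) (e : Sym2 (Fin f))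
    (h : ∀ z ∈ e, φ z = ψ z) : pairWeight R φ e = pairWeight R ψ e := by
  induction e using Sym2.ind with
  | _ a b =>
    show R.w (φ a) (φ b) = R.w (ψ a) (ψ b)
    rw [h a (Sym2.mem_mk_left a b), h b (Sym2.mem_mk_right a b)]

lemma wfun_mem (F : SimpleGraph (Fin f)) (R : WeightedGraph V) (φ : Fin f → V)
    (e : Sym2 (Fin f)) : wfun F R φ e ∈ Set.Icc (0:ℝ) 1 := by
  unfold wfun
  obtain ⟨h0, h1⟩ := pairWeight_mem R φ e
  split <;> constructor <;> linarith

lemma wfun_congr (F : SimpleGraph (Fin f)) (R : WeightedGraph V) (φ ψ : Fin f → V)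
    (e : Sym2 (Fin f)) (h : ∀ z ∈ e, φ z = ψ z) : wfun F R φ e = wfun F R ψ e := by
  unfold wfun
  rw [pairWeight_congr R φ ψ e h]

lemma prod_wfun_mem (F : SimpleGraph (Fin f)) (R : WeightedGraph V) (φ : Fin f → V)
    (r : Finset (Sym2 (Fin f))) : (∏ e ∈ r, wfun F R φ e) ∈ Set.Icc (0:ℝ) 1 :=
  ⟨Finset.prod_nonneg fun e _ => (wfun_mem F R φ e).1,
   Finset.prod_le_one (fun e _ => (wfun_mem F R φ e).1) (fun e _ => (wfun_mem F R φ e).2)⟩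

lemma mul_mem_Icc01 {a b : ℝ} (ha : a ∈ Set.Icc (0:ℝ) 1) (hb : b ∈ Set.Icc (0:ℝ) 1) :
    a * b ∈ Set.Icc (0:ℝ) 1 :=
  ⟨mul_nonneg ha.1 hb.1, mul_le_one₀ ha.2 hb.1 hb.2⟩

lemma prod_split (F : SimpleGraph (Fin f)) (R : WeightedGraph V)
    (r : Finset (Sym2 (Fin f))) (u v : Fin f)
    (hr : ∀ e ∈ r, ¬(u ∈ e ∧ v ∈ e)) (φ : Fin f → V) (x y : V) :
    ∏ e ∈ r, wfun F R (Function.update (Function.update φ u x) v y) e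
      = (∏ e ∈ r.filter (fun e => u ∈ e), wfun F R (Function.update φ u x) e)
        * ((∏ e ∈ (r.filter (fun e => ¬ u ∈ e)).filter (fun e => v ∈ e),
              wfun F R (Function.update φ v y) e)
          * (∏ e ∈ (r.filter (fun e => ¬ u ∈ e)).filter (fun e => ¬ v ∈ e),
              wfun F R φ e)) := by
  rw [← Finset.prod_filter_mul_prod_filter_not r (fun e => u ∈ e)
    (fun e => wfun F R (Function.update (Function.update φ u x) v y) e)]
  rw [← Finset.prod_filter_mul_prod_filter_not (r.filter (fun e => ¬ u ∈ e))
    (fun e => v ∈ e) (fun e => wfun F R (Function.update (Function.update φ u x) v y) e)]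
  congr 1
  · apply Finset.prod_congr rfl
    intro e he
    rw [Finset.mem_filter] at he
    have hv : v ∉ e := fun hv => hr e he.1 ⟨he.2, hv⟩
    apply wfun_congr
    intro z hz
    have : z ≠ v := fun h => hv (h ▸ hz)
    rw [Function.update_of_ne this]
  congr 1
  · apply Finset.prod_congr rfl
    intro e he
    rw [Finset.mem_filter, Finset.mem_filter] at he
    have hu : u ∉ e := he.1.2
    apply wfun_congr
    intro z hz
    by_cases hzv : z = v
    · subst hzv; rw [Function.update_self, Function.update_self]
    · have hzu : z ≠ u := fun h => hu (h ▸ hz)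
      rw [Function.update_of_ne hzv, Function.update_of_ne hzu, Function.update_of_ne hzv]
  · apply Finset.prod_congr rfl
    intro e he
    rw [Finset.mem_filter, Finset.mem_filter] at he
    have hu : u ∉ e := he.1.2
    have hv : v ∉ e := he.2
    apply wfun_congr
    intro z hz
    have hzv : z ≠ v := fun h => hv (h ▸ hz)
    have hzu : z ≠ u := fun h => hu (h ▸ hz)
    rw [Function.update_of_ne hzv, Function.update_of_ne hzu]

lemma tele (R₁ R₂ : WeightedGraph V) (F : SimpleGraph (Fin f))
    (s t : Finset (Sym2 (Fin f)))
    (hs : ∀ e ∈ s, ¬ e.IsDiag) (ht : ∀ e ∈ t, ¬ e.IsDiag) (hst : Disjoint s t) :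
    |∑ φ : Fin f → V, ((∏ e ∈ s, wfun F R₁ φ e) - ∏ e ∈ s, wfun F R₂ φ e)
        * ∏ e ∈ t, wfun F R₁ φ e|
      ≤ (s.card : ℝ) * (dCut R₁ R₂ * (Fintype.card (Fin f → V) : ℝ)) := by
  induction s using Finset.induction_on generalizing t with
  | empty => simp
  | insert a s ha ih =>
    have hat : a ∉ t := Finset.disjoint_left.mp hst (Finset.mem_insert_self a s)
    have hadiag : ¬ a.IsDiag := hs a (Finset.mem_insert_self a s)
    obtain ⟨u, v, rfl⟩ : ∃ u v : Fin f, a = s(u, v) :=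
      ⟨(Quot.out a).1, (Quot.out a).2, by
        conv_lhs => rw [← Quot.out_eq a]⟩
    have hne : u ≠ v := by
      intro h
      exact hadiag (by simp [h])
    -- abbreviations
    set w₁ := wfun F R₁ with hw₁
    set w₂ := wfun F R₂ with hw₂
    set c : (Fin f → V) → ℝ :=
      fun φ => (∏ e ∈ s, w₂ φ e) * ∏ e ∈ t, w₁ φ e with hc
    have expand : ∀ φ : Fin f → V,
        ((∏ e ∈ insert s(u,v) s, w₁ φ e) - ∏ e ∈ insert s(u,v) s, w₂ φ e)
            * ∏ e ∈ t, w₁ φ e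
          = ((∏ e ∈ s, w₁ φ e) - ∏ e ∈ s, w₂ φ e) * ∏ e ∈ insert s(u,v) t, w₁ φ e
            + (w₁ φ s(u,v) - w₂ φ s(u,v)) * c φ := by
      intro φ
      rw [Finset.prod_insert ha, Finset.prod_insert ha, Finset.prod_insert hat, hc]
      ring
    rw [Finset.sum_congr rfl fun φ _ => expand φ, Finset.sum_add_distrib]
    have hS1 : |∑ φ : Fin f → V, ((∏ e ∈ s, w₁ φ e) - ∏ e ∈ s, w₂ φ e)
          * ∏ e ∈ insert s(u,v) t, w₁ φ e|
        ≤ (s.card : ℝ) * (dCut R₁ R₂ * (Fintype.card (Fin f → V) : ℝ)) := by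
      apply ih
      · intro e he; exact hs e (Finset.mem_insert_of_mem he)
      · intro e he
        rcases Finset.mem_insert.mp he with h | h
        · subst h; exact hadiag
        · exact ht e h
      · rw [Finset.disjoint_insert_right]
        refine ⟨ha, ?_⟩
        exact Finset.disjoint_of_subset_left (Finset.subset_insert _ _) hst
    have hS2 : |∑ φ : Fin f → V, (w₁ φ s(u,v) - w₂ φ s(u,v)) * c φ|
        ≤ dCut R₁ R₂ * (Fintype.card (Fin f → V) : ℝ) := by
      have hcmem : ∀ φ, c φ ∈ Set.Icc (0:ℝ) 1 := fun φ =>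
        mul_mem_Icc01 (prod_wfun_mem F R₂ φ s) (prod_wfun_mem F R₁ φ t)
      have hfac : ∀ φ : Fin f → V, ∃ α β : V → ℝ,
          (∀ x, α x ∈ Set.Icc (0:ℝ) 1) ∧ (∀ y, β y ∈ Set.Icc (0:ℝ) 1) ∧
          ∀ x y, c (Function.update (Function.update φ u x) v y) = α x * β y := by
        intro φ
        have hrs : ∀ e ∈ s, ¬(u ∈ e ∧ v ∈ e) := by
          intro e he hmem
          have : e = s(u,v) := (Sym2.mem_and_mem_iff hne).mp hmem
          exact ha (this ▸ he)
        have hrt : ∀ e ∈ t, ¬(u ∈ e ∧ v ∈ e) := by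
          intro e he hmem
          have : e = s(u,v) := (Sym2.mem_and_mem_iff hne).mp hmem
          exact hat (this ▸ he)
        refine ⟨fun x =>
            ((∏ e ∈ s.filter (fun e => u ∈ e), w₂ (Function.update φ u x) e)
              * ∏ e ∈ (s.filter (fun e => ¬ u ∈ e)).filter (fun e => ¬ v ∈ e), w₂ φ e)
            * ((∏ e ∈ t.filter (fun e => u ∈ e), w₁ (Function.update φ u x) e)
              * ∏ e ∈ (t.filter (fun e => ¬ u ∈ e)).filter (fun e => ¬ v ∈ e), w₁ φ e),
          fun y =>
            (∏ e ∈ (s.filter (fun e => ¬ u ∈ e)).filter (fun e => v ∈ e),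
                w₂ (Function.update φ v y) e)
            * ∏ e ∈ (t.filter (fun e => ¬ u ∈ e)).filter (fun e => v ∈ e),
                w₁ (Function.update φ v y) e, ?_, ?_, ?_⟩
        · intro x
          exact mul_mem_Icc01
            (mul_mem_Icc01 (prod_wfun_mem _ _ _ _) (prod_wfun_mem _ _ _ _))
            (mul_mem_Icc01 (prod_wfun_mem _ _ _ _) (prod_wfun_mem _ _ _ _))
        · intro y
          exact mul_mem_Icc01 (prod_wfun_mem _ _ _ _) (prod_wfun_mem _ _ _ _)
        · intro x y
          rw [hc]
          simp only
          rw [prod_split F R₂ s u v hrs φ x y, prod_split F R₁ t u v hrt φ x y]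
          rw [hw₁, hw₂]
          ring
      have hsign : |∑ φ : Fin f → V, (w₁ φ s(u,v) - w₂ φ s(u,v)) * c φ|
          = |∑ φ : Fin f → V, (R₁.w (φ u) (φ v) - R₂.w (φ u) (φ v)) * c φ| := by
        by_cases he : s(u,v) ∈ F.edgeSet
        · congr 1
          apply Finset.sum_congr rfl
          intro φ _
          rw [hw₁, hw₂]
          unfold wfun
          rw [if_pos he, if_pos he]
          rfl
        · rw [← abs_neg, ← Finset.sum_neg_distrib]
          congr 1
          apply Finset.sum_congr rfl
          intro φ _
          rw [hw₁, hw₂]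
          unfold wfun
          rw [if_neg he, if_neg he]
          show -((1 - pairWeight R₁ φ s(u,v) - (1 - pairWeight R₂ φ s(u,v))) * c φ) = _
          show _ = (R₁.w (φ u) (φ v) - R₂.w (φ u) (φ v)) * c φ
          have h1 : pairWeight R₁ φ s(u,v) = R₁.w (φ u) (φ v) := rfl
          have h2 : pairWeight R₂ φ s(u,v) = R₂.w (φ u) (φ v) := rfl
          rw [h1, h2]; ring
      rw [hsign]
      exact core_lemma R₁ R₂ u v hne c hcmem hfac
    calc |∑ φ : Fin f → V, ((∏ e ∈ s, w₁ φ e) - ∏ e ∈ s, w₂ φ e)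
            * ∏ e ∈ insert s(u,v) t, w₁ φ e
          + ∑ φ : Fin f → V, (w₁ φ s(u,v) - w₂ φ s(u,v)) * c φ|
        ≤ |∑ φ : Fin f → V, ((∏ e ∈ s, w₁ φ e) - ∏ e ∈ s, w₂ φ e)
            * ∏ e ∈ insert s(u,v) t, w₁ φ e|
          + |∑ φ : Fin f → V, (w₁ φ s(u,v) - w₂ φ s(u,v)) * c φ| := abs_add_le _ _
      _ ≤ (s.card : ℝ) * (dCut R₁ R₂ * (Fintype.card (Fin f → V) : ℝ))
          + dCut R₁ R₂ * (Fintype.card (Fin f → V) : ℝ) := add_le_add hS1 hS2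
      _ = ((insert s(u,v) s).card : ℝ) * (dCut R₁ R₂ * (Fintype.card (Fin f → V) : ℝ)) := by
          rw [Finset.card_insert_of_notMem ha]
          push_cast
          ring

end Tele

section Main
variable {V : Type*} [Fintype V] {f : ℕ}

lemma homWeight_eq_prod (F : SimpleGraph (Fin f)) (R : WeightedGraph V) (φ : Fin f → V) :
    homWeight F R φ
      = ∏ e ∈ Finset.univ.filter (fun e : Sym2 (Fin f) => ¬ e.IsDiag), wfun F R φ e := by
  rw [← Finset.prod_filter_mul_prod_filter_not
    (Finset.univ.filter (fun e : Sym2 (Fin f) => ¬ e.IsDiag))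
    (fun e => e ∈ F.edgeSet) (fun e => wfun F R φ e)]
  unfold homWeight
  congr 1
  · refine Finset.prod_congr ?_ ?_
    · ext e
      simp only [Finset.mem_filter, Finset.mem_univ, true_and]
      exact ⟨fun h => ⟨F.not_isDiag_of_mem_edgeSet h, h⟩, fun h => h.2⟩
    · intro e he
      simp only [Finset.mem_filter] at he
      unfold wfun
      rw [if_pos he.2]
  · refine Finset.prod_congr ?_ ?_
    · ext e
      simp only [Finset.mem_filter, Finset.mem_univ, true_and]
      try tauto
    · intro e he
      simp only [Finset.mem_filter] at he
      unfold wfun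
      rw [if_neg he.2]

lemma offdiag_card_le (f : ℕ) :
    ((Finset.univ.filter (fun e : Sym2 (Fin f) => ¬ e.IsDiag)).card : ℝ) ≤ (f : ℝ) ^ 2 := by
  have hinj : Set.InjOn (fun e : Sym2 (Fin f) => Quot.out e)
      ((Finset.univ.filter (fun e : Sym2 (Fin f) => ¬ e.IsDiag)) : Finset (Sym2 (Fin f))) := by
    intro e₁ _ e₂ _ h
    have h' : Quot.out e₁ = Quot.out e₂ := h
    rw [← Quot.out_eq e₁, ← Quot.out_eq e₂, h']
  have hcard := Finset.card_le_card_of_injOn (fun e : Sym2 (Fin f) => Quot.out e)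
    (fun e _ => Finset.mem_univ (Quot.out e)) hinj
  have hcard2 : ((Finset.univ : Finset (Fin f × Fin f))).card = f ^ 2 := by
    simp [Finset.card_univ, sq]
  rw [hcard2] at hcard
  exact_mod_cast hcard

theorem abs_homW_sub_homW_le' (R₁ R₂ : WeightedGraph V)
    (F : SimpleGraph (Fin f)) :
    |homW F R₁ - homW F R₂| ≤ (f : ℝ) ^ 2 * dCut R₁ R₂ := by
  suffices h : |(∑ φ : Fin f → V, homWeight F R₁ φ) / (Fintype.card (Fin f → V) : ℝ)
      - (∑ φ : Fin f → V, homWeight F R₂ φ) / (Fintype.card (Fin f → V) : ℝ)|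
      ≤ (f : ℝ) ^ 2 * dCut R₁ R₂ by
    unfold homW
    convert h using 5 <;> (congr 1 <;> exact Subsingleton.elim _ _)
  have hDd : ∀ e ∈ Finset.univ.filter (fun e : Sym2 (Fin f) => ¬ e.IsDiag), ¬ e.IsDiag :=
    fun e he => (Finset.mem_filter.mp he).2
  have htele := tele R₁ R₂ F (Finset.univ.filter (fun e : Sym2 (Fin f) => ¬ e.IsDiag)) ∅
    hDd (by simp) (Finset.disjoint_empty_right _)
  simp only [Finset.prod_empty, mul_one] at htele
  rcases eq_or_ne (Fintype.card (Fin f → V) : ℝ) 0 with hN0 | hN0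
  · rw [hN0]
    simp only [div_zero, sub_zero, abs_zero]
    exact mul_nonneg (by positivity) (dCut_nonneg R₁ R₂)
  · have hNpos : (0:ℝ) < (Fintype.card (Fin f → V) : ℝ) :=
      lt_of_le_of_ne (by positivity) (Ne.symm hN0)
    have hdiff : (∑ φ : Fin f → V, homWeight F R₁ φ) / (Fintype.card (Fin f → V) : ℝ)
          - (∑ φ : Fin f → V, homWeight F R₂ φ) / (Fintype.card (Fin f → V) : ℝ)
        = (∑ φ : Fin f → V,
            ((∏ e ∈ Finset.univ.filter (fun e : Sym2 (Fin f) => ¬ e.IsDiag), wfun F R₁ φ e)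
              - ∏ e ∈ Finset.univ.filter (fun e : Sym2 (Fin f) => ¬ e.IsDiag), wfun F R₂ φ e))
          / (Fintype.card (Fin f → V) : ℝ) := by
      rw [div_sub_div_same]
      congr 1
      rw [← Finset.sum_sub_distrib]
      simp only [homWeight_eq_prod]
    rw [hdiff, abs_div, abs_of_pos hNpos, div_le_iff₀ hNpos]
    calc |∑ φ : Fin f → V,
            ((∏ e ∈ Finset.univ.filter (fun e : Sym2 (Fin f) => ¬ e.IsDiag), wfun F R₁ φ e)
              - ∏ e ∈ Finset.univ.filter (fun e : Sym2 (Fin f) => ¬ e.IsDiag), wfun F R₂ φ e)|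
        ≤ ((Finset.univ.filter (fun e : Sym2 (Fin f) => ¬ e.IsDiag)).card : ℝ)
            * (dCut R₁ R₂ * (Fintype.card (Fin f → V) : ℝ)) := htele
      _ ≤ (f : ℝ) ^ 2 * (dCut R₁ R₂ * (Fintype.card (Fin f → V) : ℝ)) := by
          apply mul_le_mul_of_nonneg_right (offdiag_card_le f)
          exact mul_nonneg (dCut_nonneg R₁ R₂) (le_of_lt hNpos)
      _ = (f : ℝ) ^ 2 * dCut R₁ R₂ * (Fintype.card (Fin f → V) : ℝ) := by ring

end Main

end AuxStatement7

/-- For weighted graphs `R₁, R₂` on the same vertex set and a graph `F`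
on `f` vertices, `|hom(F,R₁) − hom(F,R₂)| ≤ f² · d_□(R₁,R₂)`. -/
theorem abs_homW_sub_homW_le (V : Type*) [Fintype V] (R₁ R₂ : WeightedGraph V)
    (f : ℕ) (F : SimpleGraph (Fin f)) :
    |homW F R₁ - homW F R₂| ≤ (f : ℝ) ^ 2 * dCut R₁ R₂ :=
  abs_homW_sub_homW_le' R₁ R₂ F
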